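/- Let G = (V,E) be a locally finite graph, α ∈ (0,1) and q : V → ℝ a potential of class K_α. Then the following are equivalent: (i) there are a, k ≥ 0 such that (G,q) is (a,k)-sparse; (ii) there are ã ∈ (0,1) and k̃ ≥ 0 such that for all finitely supported f : V → ℂ, (1−ã)(Q_deg(f) + Q_q(f)) − k̃·‖f‖² ≤ Q_Δ(f) + Q_q(f) ≤ (1+ã)(Q_deg(f) + Q_q(f)) + k̃·‖f‖²; (iii) there are ã ∈ (0,1) and k̃ ≥ 0 such that for all finitely supported f : V → ℂ, (1−ã)(Q_deg(f) + Q_q(f)) − k̃·‖f‖² ≤ Q_Δ(f) + Q_q(f). -/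

import Mathlib

open scoped BigOperators

noncomputable section

variable {V : Type*} [DecidableEq V] (G : SimpleGraph V) [DecidableRel G.Adj]

/-- The squared `ℓ²`-norm `‖f‖² = ∑_x |f x|²` of a (finitely supported) function. -/
def qNormSq (f : V → ℂ) : ℝ := ∑' x, ‖f x‖ ^ 2

/-- The quadratic form of the Laplacian:
`Q_Δ(f) = (1/2) ∑_{x ~ y} |f x - f y|²` (sum over ordered pairs of adjacent vertices). -/
def qLap (f : V → ℂ) : ℝ :=
  (1 / 2) * ∑' (x : V), ∑' (y : V), if G.Adj x y then ‖f x - f y‖ ^ 2 else 0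

/-- The magnetic quadratic form
`Q_θ(f) = (1/2) ∑_{x ~ y} |f x - e^{iθ(x,y)} f y|²`. -/
def qMag (θ : V → V → ℝ) (f : V → ℂ) : ℝ :=
  (1 / 2) * ∑' (x : V), ∑' (y : V),
    if G.Adj x y then ‖f x - Complex.exp (Complex.I * (θ x y)) * f y‖ ^ 2 else 0

/-- The quadratic form of a potential: `Q_q(f) = ∑_x q x * |f x|²`. -/
def qPot (q : V → ℝ) (f : V → ℂ) : ℝ := ∑' x, q x * ‖f x‖ ^ 2

variable [G.LocallyFinite]

/-- The quadratic form of the degree: `Q_deg(f) = ∑_x deg x * |f x|²`. -/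
def qDeg (f : V → ℂ) : ℝ := ∑' x, (G.degree x : ℝ) * ‖f x‖ ^ 2

/-- Twice the number of undirected edges of the subgraph induced on `W`,
i.e. the number of ordered pairs of adjacent vertices in `W × W`. -/
def edgesTwice (W : Finset V) : ℕ := ((W ×ˢ W).filter fun p => G.Adj p.1 p.2).card

/-- The cardinality `|∂W|` of the edge boundary of `W`. -/
def bdryCard (W : Finset V) : ℕ :=
  ∑ x ∈ W, ((G.neighborFinset x).filter fun y => y ∉ W).card

/-- `(G, q)` is `(a,k)`-sparse: `2|E_W| ≤ k|W| + a(|∂W| + q₊(W))` for all finite `W`. -/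
def IsSparse (q : V → ℝ) (a k : ℝ) : Prop :=
  ∀ W : Finset V,
    (edgesTwice G W : ℝ) ≤ k * W.card + a * ((bdryCard G W : ℝ) + ∑ x ∈ W, max (q x) 0)

/-- The potential `q` belongs to the class `K_α`:
`Q_{q₋}(f) ≤ α (Q_Δ(f) + Q_{q₊}(f)) + C ‖f‖²` for all finitely supported `f`. -/
def KClass (q : V → ℝ) (α : ℝ) : Prop :=
  ∃ C : ℝ, 0 ≤ C ∧ ∀ f : V → ℂ, (Function.support f).Finite →
    qPot (fun x => max (-q x) 0) f ≤
      α * (qLap G f + qPot (fun x => max (q x) 0) f) + C * qNormSq f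

/-- The potential `q` belongs to the magnetic class `K_α^θ`:
`Q_{q₋}(f) ≤ α (Q_θ(f) + Q_{q₊}(f)) + C ‖f‖²` for all finitely supported `f`. -/
def KClassTheta (θ : V → V → ℝ) (q : V → ℝ) (α : ℝ) : Prop :=
  ∃ C : ℝ, 0 ≤ C ∧ ∀ f : V → ℂ, (Function.support f).Finite →
    qPot (fun x => max (-q x) 0) f ≤
      α * (qMag G θ f + qPot (fun x => max (q x) 0) f) + C * qNormSq f

/-- The Cheeger (isoperimetric) constant of `U ⊆ V`:
the infimum over nonempty finite `W ⊆ U` of `(|∂W| + q(W)) / (deg(W) + q(W))`,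
with the convention that the quotient is `0` when the denominator vanishes. -/
def cheeger (q : V → ℝ) (U : Set V) : ℝ :=
  ⨅ W : {W : Finset V // ↑W ⊆ U ∧ W.Nonempty},
    if (∑ x ∈ W.1, ((G.degree x : ℝ) + q x)) = 0 then 0
    else ((bdryCard G W.1 : ℝ) + ∑ x ∈ W.1, q x) / ∑ x ∈ W.1, ((G.degree x : ℝ) + q x)

/-- The Cheeger constant at infinity: `α_∞ = sup over finite K of α_{V∖K}`. -/
def cheegerInfty (q : V → ℝ) : ℝ :=
  ⨆ K : Finset V, cheeger G q ((↑K : Set V)ᶜ)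

/-!
(iii) ⇒ (i): on the indicator `1_W` the forms are `Q_Δ = |∂W|`, `Q_deg = deg W = 2|E_W| + |∂W|`,
`Q_q = q(W)` and `‖1_W‖² = |W|`, so the lower bound at `1_W` rearranges to `(a, k)`-sparseness
with `a = ã / (1 - ã)` and `k = k̃ / (1 - ã)`.

(i) ⇒ (ii): sparseness of the level sets of `|f|²` gives, through the discrete co-area
formula and Young's inequality, `Q_deg(f) ≤ 2k‖f‖² + 2(1+a)² Q_Δ(|f|) + 2a Q_{q₊}(f)`. Moreover
`|Q_Δ(f) - Q_deg(f)| ≤ Q_deg(f) - Q_Δ(|f|)`, and the `K_α` condition at `|f|` bounds `Q_{q₋}(f)`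
by `α (Q_Δ(|f|) + Q_{q₊}(f))`. Together these give both bounds with `ã = 1 - δ`,
`δ = (1 - α) / (4 (1 + a)²)`.
-/

def closedNbhd (s : Set V) : Set V := s ∪ ⋃ x ∈ s, G.neighborSet x

def edgesIn (T : Finset V) : Finset (V × V) := (T ×ˢ T).filter fun p => G.Adj p.1 p.2

section

variable {G}

omit [DecidableEq V] [DecidableRel G.Adj] [G.LocallyFinite] in
lemma subset_closedNbhd (s : Set V) : s ⊆ closedNbhd G s := Set.subset_union_left

omit [DecidableEq V] [DecidableRel G.Adj] [G.LocallyFinite] in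
lemma mem_closedNbhd_of_adj {s : Set V} {x y : V} (hx : x ∈ s) (hxy : G.Adj x y) :
    y ∈ closedNbhd G s :=
  Or.inr (Set.mem_biUnion hx hxy)

omit [DecidableEq V] [DecidableRel G.Adj] [G.LocallyFinite] in
lemma closedNbhd_mono {s t : Set V} (h : s ⊆ t) : closedNbhd G s ⊆ closedNbhd G t :=
  Set.union_subset_union h (Set.biUnion_subset_biUnion_left h)

omit [DecidableEq V] [DecidableRel G.Adj] in
lemma exists_closedNbhd_subset {s : Set V} (hs : s.Finite) :
    ∃ T : Finset V, closedNbhd G s ⊆ T :=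
  ⟨(hs.union (hs.biUnion fun x _ => (G.neighborSet x).toFinite)).toFinset, by
    simp [closedNbhd]⟩

omit [DecidableEq V] in
lemma qPot_eq_sum (w : V → ℝ) {f : V → ℂ} {S : Finset V} (hS : Function.support f ⊆ S) :
    qPot w f = ∑ x ∈ S, w x * ‖f x‖ ^ 2 :=
  tsum_eq_sum fun x hx => by
    simp [Function.notMem_support.1 fun h => hx (hS h)]

omit [DecidableEq V] in
lemma qNormSq_eq_qPot (f : V → ℂ) : qNormSq f = qPot 1 f := by
  simp [qNormSq, qPot]

omit [DecidableEq V] [DecidableRel G.Adj] in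
lemma qDeg_eq_qPot (f : V → ℂ) : qDeg G f = qPot (fun x => (G.degree x : ℝ)) f := rfl

omit [DecidableEq V] in
lemma qPot_norm (w : V → ℝ) (f : V → ℂ) : qPot w (fun x => (‖f x‖ : ℂ)) = qPot w f := by
  simp only [qPot, Complex.norm_real, norm_norm]

omit [DecidableEq V] [DecidableRel G.Adj] in
lemma qDeg_norm (f : V → ℂ) : qDeg G (fun x => (‖f x‖ : ℂ)) = qDeg G f := qPot_norm _ f

omit [DecidableEq V] in
lemma qNormSq_norm (f : V → ℂ) : qNormSq (fun x => (‖f x‖ : ℂ)) = qNormSq f := by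
  rw [qNormSq_eq_qPot, qNormSq_eq_qPot, qPot_norm]

omit [DecidableEq V] [G.LocallyFinite] in
lemma qLap_eq_sum {f : V → ℂ} {T : Finset V} (hT : closedNbhd G (Function.support f) ⊆ T) :
    qLap G f = (1 / 2) * ∑ p ∈ edgesIn G T, ‖f p.1 - f p.2‖ ^ 2 := by
  have hin : ∀ x y, G.Adj x y → f x ≠ 0 → x ∈ T ∧ y ∈ T := fun x y hxy hx =>
    ⟨hT (subset_closedNbhd _ hx), hT (mem_closedNbhd_of_adj hx hxy)⟩
  have hzero : ∀ x y, G.Adj x y → (x ∉ T ∨ y ∉ T) → f x = 0 ∧ f y = 0 := by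
    intro x y hxy hout
    constructor <;> by_contra hne
    · have := hin x y hxy hne; tauto
    · have := hin y x hxy.symm hne; tauto
  rw [qLap, edgesIn, Finset.sum_filter, Finset.sum_product]
  congr 1
  refine (tsum_eq_sum fun x hx => ?_).trans (Finset.sum_congr rfl fun x _ => ?_)
  · refine (tsum_congr fun y => ?_).trans tsum_zero
    split_ifs with hxy
    · simp [(hzero x y hxy (Or.inl hx)).1, (hzero x y hxy (Or.inl hx)).2]
    · rfl
  · refine tsum_eq_sum fun y hy => ?_
    split_ifs with hxy
    · simp [(hzero x y hxy (Or.inr hy)).1, (hzero x y hxy (Or.inr hy)).2]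
    · rfl

omit [DecidableEq V] [G.LocallyFinite] in
lemma sum_edgesIn_swap {M : Type*} [AddCommMonoid M] (T : Finset V) (F : V × V → M) :
    ∑ p ∈ edgesIn G T, F p = ∑ p ∈ edgesIn G T, F p.swap :=
  Finset.sum_equiv (Equiv.prodComm V V)
    (fun p => by simp [edgesIn, G.adj_comm, and_comm]) (fun _ _ => rfl)

omit [DecidableEq V] in
lemma sum_edgesIn_fst (u : V → ℝ) {T : Finset V} (hT : closedNbhd G (Function.support u) ⊆ T) :
    ∑ p ∈ edgesIn G T, u p.1 = ∑ x ∈ T, (G.degree x : ℝ) * u x := by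
  rw [edgesIn, Finset.sum_filter, Finset.sum_product]
  refine Finset.sum_congr rfl fun x _ => ?_
  by_cases hx : u x = 0
  · simp [hx]
  have hnbr : T.filter (G.Adj x) = G.neighborFinset x := by
    ext y
    simp only [Finset.mem_filter, SimpleGraph.mem_neighborFinset, and_iff_right_iff_imp]
    exact fun hxy => hT (mem_closedNbhd_of_adj hx hxy)
  rw [← Finset.sum_filter, hnbr]
  simp [G.card_neighborFinset_eq_degree]

omit [DecidableEq V] in
lemma sum_edgesIn_snd (u : V → ℝ) {T : Finset V} (hT : closedNbhd G (Function.support u) ⊆ T) :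
    ∑ p ∈ edgesIn G T, u p.2 = ∑ x ∈ T, (G.degree x : ℝ) * u x := by
  rw [sum_edgesIn_swap, ← sum_edgesIn_fst u hT]
  rfl

omit [DecidableEq V] in
lemma qLap_eq_qDeg_sub {f : V → ℂ} {T : Finset V} (hT : closedNbhd G (Function.support f) ⊆ T) :
    qLap G f = qDeg G f - ∑ p ∈ edgesIn G T, (f p.1 * starRingEnd ℂ (f p.2)).re := by
  have hsupp : Function.support (fun x => ‖f x‖ ^ 2) = Function.support f := by
    ext x; simp
  have hfst := sum_edgesIn_fst (fun x => ‖f x‖ ^ 2) (hsupp ▸ hT)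
  have hsnd := sum_edgesIn_snd (fun x => ‖f x‖ ^ 2) (hsupp ▸ hT)
  have hdeg : qDeg G f = ∑ x ∈ T, (G.degree x : ℝ) * ‖f x‖ ^ 2 :=
    qPot_eq_sum _ ((subset_closedNbhd _).trans hT)
  simp only [qLap_eq_sum hT, Complex.sq_norm, Complex.normSq_sub, Finset.sum_sub_distrib,
    Finset.sum_add_distrib, ← Finset.mul_sum] at hfst hsnd hdeg ⊢
  rw [hfst, hsnd, hdeg]
  ring

omit [DecidableEq V] in
lemma abs_qLap_sub_qDeg_le {f : V → ℂ} (hf : (Function.support f).Finite) :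
    |qLap G f - qDeg G f| ≤ qDeg G f - qLap G (fun x => (‖f x‖ : ℂ)) := by
  obtain ⟨T, hT⟩ := exists_closedNbhd_subset (G := G) hf
  have hsupp : Function.support (fun x => (‖f x‖ : ℂ)) = Function.support f := by
    ext x; simp
  have hT' : closedNbhd G (Function.support fun x => (‖f x‖ : ℂ)) ⊆ T := hsupp ▸ hT
  rw [qLap_eq_qDeg_sub hT, qLap_eq_qDeg_sub hT', qDeg_norm, sub_sub_cancel_left, abs_neg,
    sub_sub_cancel]
  refine (Finset.abs_sum_le_sum_abs _ _).trans (Finset.sum_le_sum fun p _ => ?_)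
  calc |(f p.1 * starRingEnd ℂ (f p.2)).re| ≤ ‖f p.1 * starRingEnd ℂ (f p.2)‖ :=
        Complex.abs_re_le_norm _
    _ = _ := by simp [← Complex.ofReal_mul]

lemma sum_degree_eq_edgesTwice_add_bdryCard (W : Finset V) :
    ∑ x ∈ W, G.degree x = edgesTwice G W + bdryCard G W := by
  rw [edgesTwice, bdryCard, Finset.card_filter, Finset.sum_product, ← Finset.sum_add_distrib]
  refine Finset.sum_congr rfl fun x _ => ?_
  rw [← G.card_neighborFinset_eq_degree,
    ← Finset.card_filter_add_card_filter_not (fun y => y ∈ W), ← Finset.card_filter]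
  congr 2
  ext y
  simp only [Finset.mem_filter, SimpleGraph.mem_neighborFinset]
  tauto

lemma isSparse_iff {q : V → ℝ} {a k : ℝ} :
    IsSparse G q a k ↔ ∀ W : Finset V, ∑ x ∈ W, (G.degree x : ℝ) ≤
      k * W.card + (1 + a) * bdryCard G W + a * ∑ x ∈ W, max (q x) 0 := by
  refine forall_congr' fun W => ?_
  have hdeg := congrArg (Nat.cast (R := ℝ)) (sum_degree_eq_edgesTwice_add_bdryCard (G := G) W)
  push_cast at hdeg
  constructor <;> intro h <;> linarith

omit [DecidableEq V] in
lemma qPot_indicator (w : V → ℝ) (W : Finset V) :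
    qPot w ((W : Set V).indicator 1) = ∑ x ∈ W, w x :=
  (qPot_eq_sum w (Set.support_indicator_subset)).trans
    (Finset.sum_congr rfl fun x hx => by simp [Set.indicator_of_mem (Finset.mem_coe.2 hx)])

omit [DecidableEq V] in
lemma qNormSq_indicator (W : Finset V) : qNormSq ((W : Set V).indicator (1 : V → ℂ)) = W.card := by
  simp [qNormSq_eq_qPot, qPot_indicator]

omit [G.LocallyFinite] in
lemma sum_edgesIn_indicator_mul {W T : Finset V} (hWT : W ⊆ T) :
    ∑ p ∈ edgesIn G T, ((W : Set V).indicator (1 : V → ℂ) p.1 *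
      starRingEnd ℂ ((W : Set V).indicator 1 p.2)).re = edgesTwice G W := by
  have hpt : ∀ p : V × V, ((W : Set V).indicator (1 : V → ℂ) p.1 *
      starRingEnd ℂ ((W : Set V).indicator 1 p.2)).re = if p ∈ W ×ˢ W then 1 else 0 := by
    intro p
    by_cases h1 : p.1 ∈ W <;> by_cases h2 : p.2 ∈ W <;> simp [h1, h2]
  rw [Finset.sum_congr rfl fun p _ => hpt p, Finset.sum_boole, edgesTwice, edgesIn,
    Finset.filter_filter]
  congr 2
  ext p
  simp only [Finset.mem_filter, Finset.mem_product]
  constructor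
  · tauto
  · exact fun ⟨⟨h1, h2⟩, h⟩ => ⟨⟨hWT h1, hWT h2⟩, h, h1, h2⟩

lemma qLap_indicator (W : Finset V) :
    qLap G ((W : Set V).indicator 1) = bdryCard G W := by
  obtain ⟨T, hT⟩ := exists_closedNbhd_subset (G := G)
    ((W.finite_toSet).subset (Set.support_indicator_subset (f := (1 : V → ℂ))))
  have hWT : W ⊆ T := fun x hx =>
    Finset.mem_coe.1 (hT (subset_closedNbhd _ (by simpa using hx)))
  have hdeg := congrArg (Nat.cast (R := ℝ)) (sum_degree_eq_edgesTwice_add_bdryCard (G := G) W)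
  push_cast at hdeg
  rw [qLap_eq_qDeg_sub hT, sum_edgesIn_indicator_mul hWT, qDeg_eq_qPot, qPot_indicator, hdeg]
  ring

lemma sum_edgesIn_abs_sub_indicator {W T : Finset V}
    (hT : closedNbhd G (W : Set V) ⊆ T) :
    ∑ p ∈ edgesIn G T, |(W : Set V).indicator (1 : V → ℝ) p.1 - (W : Set V).indicator 1 p.2| =
      2 * bdryCard G W := by
  have hT' : closedNbhd G (Function.support ((W : Set V).indicator (1 : V → ℂ))) ⊆ T :=
    (closedNbhd_mono Set.support_indicator_subset).trans hT
  have hpt : ∀ p : V × V, |(W : Set V).indicator (1 : V → ℝ) p.1 - (W : Set V).indicator 1 p.2| =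
      ‖(W : Set V).indicator (1 : V → ℂ) p.1 - (W : Set V).indicator 1 p.2‖ ^ 2 := by
    intro p
    by_cases h1 : p.1 ∈ W <;> by_cases h2 : p.2 ∈ W <;> simp [h1, h2]
  rw [Finset.sum_congr rfl fun p _ => hpt p, ← qLap_indicator, qLap_eq_sum hT']
  ring

lemma exists_isSparse_of_lower_bound {q : V → ℝ} {ta tk : ℝ} (hta0 : 0 ≤ ta) (hta1 : ta < 1)
    (htk : 0 ≤ tk)
    (hlow : ∀ f : V → ℂ, (Function.support f).Finite →
      (1 - ta) * (qDeg G f + qPot q f) - tk * qNormSq f ≤ qLap G f + qPot q f) :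
    ∃ a k : ℝ, 0 ≤ a ∧ 0 ≤ k ∧ IsSparse G q a k := by
  have hta : 0 < 1 - ta := sub_pos.2 hta1
  refine ⟨ta / (1 - ta), tk / (1 - ta), by positivity, by positivity, isSparse_iff.2 fun W => ?_⟩
  have h := hlow _ ((W.finite_toSet).subset (Set.support_indicator_subset (f := (1 : V → ℂ))))
  rw [qDeg_eq_qPot, qPot_indicator, qPot_indicator, qNormSq_indicator, qLap_indicator] at h
  have hq : ta * ∑ x ∈ W, q x ≤ ta * ∑ x ∈ W, max (q x) 0 :=
    mul_le_mul_of_nonneg_left (Finset.sum_le_sum fun x _ => le_max_left _ _) hta0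
  have hrhs : tk / (1 - ta) * W.card + (1 + ta / (1 - ta)) * bdryCard G W +
      ta / (1 - ta) * ∑ x ∈ W, max (q x) 0 =
      (tk * W.card + bdryCard G W + ta * ∑ x ∈ W, max (q x) 0) / (1 - ta) := by
    field_simp
    ring
  rw [hrhs, le_div_iff₀ hta]
  linarith

omit [DecidableEq V] in
lemma abs_sub_add_mul_indicator {W : Set V} {g : V → ℝ} (hg0 : 0 ≤ g)
    (hgW : Function.support g ⊆ W) {m : ℝ} (hm : 0 ≤ m) (x y : V) :
    |(g x + m * W.indicator 1 x) - (g y + m * W.indicator 1 y)| =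
      |g x - g y| + m * |W.indicator (1 : V → ℝ) x - W.indicator 1 y| := by
  have hg : ∀ z, z ∉ W → g z = 0 := fun z hz => Function.notMem_support.1 fun h => hz (hgW h)
  rw [show (g x + m * W.indicator 1 x) - (g y + m * W.indicator 1 y) =
      (g x - g y) + m * (W.indicator 1 x - W.indicator 1 y) by ring,
    show m * |W.indicator 1 x - W.indicator 1 y| = |m * (W.indicator 1 x - W.indicator 1 y)| by
      rw [abs_mul, abs_of_nonneg hm],
    abs_add_eq_add_abs_iff]
  by_cases hx : x ∈ W <;> by_cases hy : y ∈ W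
  · simp [hx, hy, le_total]
  · simpa [hx, hy, hg y hy, hm] using Or.inl (hg0 x)
  · simpa [hx, hy, hg x hx, hm] using Or.inr (hg0 y)
  · simp [hx, hy, hg x hx, hg y hy]

/-- Discrete co-area inequality. The induction peels off `m • 1_S` with `m = min_S h`, which
shrinks the support and splits the gradient term exactly. -/
lemma sum_mul_le_of_forall_sum_le_bdryCard {w : V → ℝ} {c : ℝ}
    (hw : ∀ W : Finset V, ∑ x ∈ W, w x ≤ c * bdryCard G W)
    {T : Finset V} {h : V → ℝ} (h0 : 0 ≤ h) (hT : closedNbhd G (Function.support h) ⊆ T) :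
    ∑ x ∈ T, w x * h x ≤ c / 2 * ∑ p ∈ edgesIn G T, |h p.1 - h p.2| := by
  have hfin : (Function.support h).Finite :=
    T.finite_toSet.subset ((subset_closedNbhd _).trans hT)
  suffices key : ∀ S : Finset V, closedNbhd G S ⊆ T → ∀ h : V → ℝ, 0 ≤ h →
      Function.support h ⊆ S →
      ∑ x ∈ T, w x * h x ≤ c / 2 * ∑ p ∈ edgesIn G T, |h p.1 - h p.2| from
    key hfin.toFinset (by rwa [hfin.coe_toFinset]) h h0 (by rw [hfin.coe_toFinset])
  intro S
  induction S using Finset.strongInduction with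
  | H S ih =>
  intro hST h h0 hhS
  rcases S.eq_empty_or_nonempty with rfl | hne
  · have : h = 0 := Function.support_eq_empty_iff.1 (Set.subset_empty_iff.1 (by simpa using hhS))
    simp [this]
  obtain ⟨x₀, hx₀S, hx₀⟩ := S.exists_mem_eq_inf' hne h
  set m := S.inf' hne h
  set χ := (S : Set V).indicator (1 : V → ℝ)
  set g : V → ℝ := fun x => h x - m * χ x
  have hm : 0 ≤ m := hx₀ ▸ h0 x₀
  have hoff : ∀ x, x ∉ S → h x = 0 := fun x hx => Function.notMem_support.1 fun h => hx (hhS h)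
  have hg0 : 0 ≤ g := fun x => by
    by_cases hx : x ∈ S
    · simpa [g, χ, hx] using S.inf'_le h hx
    · simp [g, χ, hx, hoff x hx]
  have hgS : Function.support g ⊆ ↑(S.erase x₀) := fun x hx => by
    by_cases hxS : x ∈ S
    · refine Finset.mem_coe.2 (Finset.mem_erase.2 ⟨fun hxx => hx ?_, hxS⟩)
      simp [g, χ, hxx, hx₀S, hx₀, m]
    · exact absurd (by simp [g, χ, hxS, hoff x hxS]) hx
  have hsplit : ∀ x, h x = g x + m * χ x := fun x => by simp [g]
  have ihg := ih _ (S.erase_ssubset hx₀S)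
    ((closedNbhd_mono (Finset.coe_subset.2 (S.erase_subset x₀))).trans hST) g hg0 hgS
  have hlin : ∑ x ∈ T, w x * h x = ∑ x ∈ T, w x * g x + m * ∑ x ∈ S, w x := by
    have hST' : S ⊆ T := fun x hx => Finset.mem_coe.1 (hST (subset_closedNbhd _ hx))
    simp only [hsplit, mul_add, Finset.sum_add_distrib, Finset.mul_sum]
    rw [← Finset.sum_indicator_subset _ hST']
    congr 1
    refine Finset.sum_congr rfl fun x _ => ?_
    by_cases hx : x ∈ S <;> simp [χ, hx, mul_comm]
  have hgrad : ∑ p ∈ edgesIn G T, |h p.1 - h p.2| =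
      ∑ p ∈ edgesIn G T, |g p.1 - g p.2| + m * (2 * bdryCard G S) := by
    rw [← sum_edgesIn_abs_sub_indicator hST, Finset.mul_sum, ← Finset.sum_add_distrib]
    refine Finset.sum_congr rfl fun p _ => ?_
    rw [hsplit p.1, hsplit p.2]
    exact abs_sub_add_mul_indicator hg0 (hgS.trans (Finset.coe_subset.2 (S.erase_subset x₀))) hm _ _
  rw [hlin, hgrad]
  linarith [mul_le_mul_of_nonneg_left (hw S) hm]

omit [DecidableEq V] in
lemma qPot_nonneg {w : V → ℝ} (hw : 0 ≤ w) (f : V → ℂ) : 0 ≤ qPot w f :=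
  tsum_nonneg fun x => mul_nonneg (hw x) (sq_nonneg _)

omit [DecidableEq V] [G.LocallyFinite] in
lemma qLap_nonneg (f : V → ℂ) : 0 ≤ qLap G f :=
  mul_nonneg (by norm_num) (tsum_nonneg fun x => tsum_nonneg fun y => by
    split_ifs <;> positivity)

omit [DecidableEq V] in
lemma qPot_sub (w₁ w₂ : V → ℝ) {f : V → ℂ} (hf : (Function.support f).Finite) :
    qPot (fun x => w₁ x - w₂ x) f = qPot w₁ f - qPot w₂ f := by
  have hS : Function.support f ⊆ hf.toFinset := by simp
  rw [qPot_eq_sum _ hS, qPot_eq_sum _ hS, qPot_eq_sum _ hS, ← Finset.sum_sub_distrib]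
  simp only [sub_mul]

lemma mul_abs_sq_norm_sub_sq_norm_le {E : Type*} [SeminormedAddCommGroup E] {c : ℝ}
    (hc : 0 ≤ c) (u v : E) :
    c * |‖u‖ ^ 2 - ‖v‖ ^ 2| ≤ c ^ 2 * ‖u - v‖ ^ 2 + (‖u‖ ^ 2 + ‖v‖ ^ 2) / 2 := by
  have h : |‖u‖ ^ 2 - ‖v‖ ^ 2| ≤ ‖u - v‖ * (‖u‖ + ‖v‖) := by
    rw [sq_sub_sq, abs_mul, abs_of_nonneg (by positivity : 0 ≤ ‖u‖ + ‖v‖), mul_comm]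
    exact mul_le_mul_of_nonneg_right (abs_norm_sub_norm_le u v) (by positivity)
  nlinarith [mul_le_mul_of_nonneg_left h hc, sq_nonneg (2 * c * ‖u - v‖ - (‖u‖ + ‖v‖)),
    sq_nonneg (‖u‖ - ‖v‖)]

lemma qDeg_le_of_isSparse {q : V → ℝ} {a k : ℝ} (ha : 0 ≤ a) (hsp : IsSparse G q a k)
    {f : V → ℂ} (hf : (Function.support f).Finite) :
    qDeg G f ≤ 2 * k * qNormSq f + 2 * (1 + a) ^ 2 * qLap G f +
      2 * a * qPot (fun x => max (q x) 0) f := by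
  obtain ⟨T, hT⟩ := exists_closedNbhd_subset (G := G) hf
  have hsupp : Function.support (fun x => ‖f x‖ ^ 2) = Function.support f := by
    ext x; simp
  have hST : Function.support f ⊆ T := (subset_closedNbhd _).trans hT
  have hw : ∀ W : Finset V, ∑ x ∈ W, ((G.degree x : ℝ) - k - a * max (q x) 0) ≤
      (1 + a) * bdryCard G W := fun W => by
    have := isSparse_iff.1 hsp W
    simp only [Finset.sum_sub_distrib, ← Finset.mul_sum, Finset.sum_const, nsmul_eq_mul]
    linarith
  have hcoarea := sum_mul_le_of_forall_sum_le_bdryCard hw (h := fun x => ‖f x‖ ^ 2)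
    (fun x => sq_nonneg _) (hsupp ▸ hT)
  have hyoung : ∑ p ∈ edgesIn G T, (1 + a) * |‖f p.1‖ ^ 2 - ‖f p.2‖ ^ 2| ≤
      ∑ p ∈ edgesIn G T, ((1 + a) ^ 2 * ‖f p.1 - f p.2‖ ^ 2 + (‖f p.1‖ ^ 2 + ‖f p.2‖ ^ 2) / 2) :=
    Finset.sum_le_sum fun p _ => mul_abs_sq_norm_sub_sq_norm_le (by linarith) _ _
  have hfst := sum_edgesIn_fst (fun x => ‖f x‖ ^ 2) (hsupp ▸ hT)
  have hsnd := sum_edgesIn_snd (fun x => ‖f x‖ ^ 2) (hsupp ▸ hT)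
  simp only [sub_mul, Finset.sum_sub_distrib, Finset.sum_add_distrib, ← Finset.mul_sum,
    ← Finset.sum_div, mul_assoc] at hcoarea hyoung
  rw [qDeg_eq_qPot, qNormSq_eq_qPot, qPot_eq_sum _ hST, qPot_eq_sum _ hST, qPot_eq_sum _ hST,
    qLap_eq_sum hT]
  simp only [Pi.one_apply, one_mul] at hfst hsnd ⊢
  linarith

lemma exists_twoSided_of_isSparse {q : V → ℝ} {α a k : ℝ} (hα0 : 0 ≤ α) (hα1 : α < 1)
    (hq : KClass G q α) (ha : 0 ≤ a) (hk : 0 ≤ k) (hsp : IsSparse G q a k) :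
    ∃ ta tk : ℝ, 0 < ta ∧ ta < 1 ∧ 0 ≤ tk ∧
      ∀ f : V → ℂ, (Function.support f).Finite →
        (1 - ta) * (qDeg G f + qPot q f) - tk * qNormSq f ≤ qLap G f + qPot q f ∧
        qLap G f + qPot q f ≤ (1 + ta) * (qDeg G f + qPot q f) + tk * qNormSq f := by
  obtain ⟨C, hC, hKα⟩ := hq
  set δ := (1 - α) / (4 * (1 + a) ^ 2)
  have hδ : δ * (4 * (1 + a) ^ 2) = 1 - α := div_mul_cancel₀ _ (by positivity)
  have hδ0 : 0 < δ := div_pos (by linarith) (by positivity)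
  have hδ1 : δ ≤ 1 / 4 := by nlinarith [mul_nonneg hδ0.le (by positivity : 0 ≤ 2 * a + a ^ 2)]
  have hδa : 2 * a * δ ≤ (1 - δ) * (1 - α) := by nlinarith [sq_nonneg (1 - a)]
  refine ⟨1 - δ, 2 * k * δ + C, by linarith, by linarith, by positivity, fun f hf => ?_⟩
  have hg : (Function.support fun x => (‖f x‖ : ℂ)).Finite :=
    hf.subset fun x hx => by simpa using hx
  have hLap := abs_qLap_sub_qDeg_le (G := G) hf
  have hDeg := qDeg_le_of_isSparse ha hsp hg
  have hNeg := hKα _ hg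
  simp only [qDeg_norm, qNormSq_norm, qPot_norm] at hDeg hNeg
  have hPot := qPot_sub (fun x => max (q x) 0) (fun x => max (-q x) 0) hf
  simp only [max_zero_sub_eq_self] at hPot
  set s := qLap G fun x => (‖f x‖ : ℂ)
  have hs : 0 ≤ s := qLap_nonneg _
  have hP : 0 ≤ qPot (fun x => max (q x) 0) f := qPot_nonneg (fun x => le_max_right _ _) f
  have hN : 0 ≤ qNormSq f := qNormSq_eq_qPot f ▸ qPot_nonneg zero_le_one f
  have key : δ * qDeg G f ≤ s + (1 - δ) * qPot q f + (2 * k * δ + C) * qNormSq f := by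
    have hδs : δ * (2 * (1 + a) ^ 2 * s) = (1 - α) / 2 * s := by linear_combination s / 2 * hδ
    rw [hPot]
    linarith [mul_le_mul_of_nonneg_left hDeg hδ0.le,
      mul_le_mul_of_nonneg_left hNeg (by linarith : 0 ≤ 1 - δ),
      mul_nonneg hs (by positivity : 0 ≤ (1 - α) / 2 + δ * α),
      mul_nonneg hP (by linarith : 0 ≤ (1 - δ) * (1 - α) - 2 * a * δ),
      mul_nonneg (mul_nonneg hδ0.le hC) hN]
  obtain ⟨hlo, hhi⟩ := abs_le.1 hLap
  constructor <;> linarith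

end

theorem stmt6 (q : V → ℝ) (α : ℝ) (hα0 : 0 < α) (hα1 : α < 1)
    (hq : KClass G q α) :
    ((∃ a k : ℝ, 0 ≤ a ∧ 0 ≤ k ∧ IsSparse G q a k) ↔
      (∃ ta tk : ℝ, 0 < ta ∧ ta < 1 ∧ 0 ≤ tk ∧
        ∀ f : V → ℂ, (Function.support f).Finite →
          (1 - ta) * (qDeg G f + qPot q f) - tk * qNormSq f ≤ qLap G f + qPot q f ∧
          qLap G f + qPot q f ≤ (1 + ta) * (qDeg G f + qPot q f) + tk * qNormSq f)) ∧
    ((∃ ta tk : ℝ, 0 < ta ∧ ta < 1 ∧ 0 ≤ tk ∧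
        ∀ f : V → ℂ, (Function.support f).Finite →
          (1 - ta) * (qDeg G f + qPot q f) - tk * qNormSq f ≤ qLap G f + qPot q f ∧
          qLap G f + qPot q f ≤ (1 + ta) * (qDeg G f + qPot q f) + tk * qNormSq f) ↔
      (∃ ta tk : ℝ, 0 < ta ∧ ta < 1 ∧ 0 ≤ tk ∧
        ∀ f : V → ℂ, (Function.support f).Finite →
          (1 - ta) * (qDeg G f + qPot q f) - tk * qNormSq f ≤ qLap G f + qPot q f)) := by
  have sparse_to_twoSided : (∃ a k : ℝ, 0 ≤ a ∧ 0 ≤ k ∧ IsSparse G q a k) → _ :=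
    fun ⟨a, k, ha, hk, hsp⟩ => exists_twoSided_of_isSparse hα0.le hα1 hq ha hk hsp
  refine ⟨⟨sparse_to_twoSided, fun ⟨ta, tk, hta0, hta1, htk, h⟩ => ?_⟩,
    ⟨fun ⟨ta, tk, hta0, hta1, htk, h⟩ => ⟨ta, tk, hta0, hta1, htk, fun f hf => (h f hf).1⟩,
      fun ⟨ta, tk, hta0, hta1, htk, h⟩ => sparse_to_twoSided ?_⟩⟩
  · exact exists_isSparse_of_lower_bound hta0.le hta1 htk fun f hf => (h f hf).1
  · exact exists_isSparse_of_lower_bound hta0.le hta1 htk h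

end
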